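/- For α > 0, the integral ∫₀^∞ e^{-v²t}·(4α/((4πα)² + v²)) dv equals (e^{(4πα)²t}/2)·(1 - Φ(4πα√t)), where Φ is the error function Φ(x) = (2/√π)∫₀^x e^{-u²} du. -/

import Mathlib

/-!
For `a > 0` put `G(s) = ∫₀^∞ e^{-s v²} / (a² + v²) dv`. Differentiating under the integral sign and
splitting `v² / (a² + v²) = 1 - a² / (a² + v²)` gives `G' = a² G - √(π / s) / 2`, so
`e^{-a² s} G(s)` and `π / (2a) · erfc(a √s)` have the same derivative on `(0, ∞)`. Both tend to `0`
as `s → ∞`, hence they coincide.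
-/

open MeasureTheory Real Filter Set Topology

theorem eq_of_hasDerivAt_zero_of_tendsto_atTop {E : Type*} [NormedAddCommGroup E]
    [NormedSpace ℝ E] {f : ℝ → E} {t : ℝ} {L : E} (hf : ∀ s, t ≤ s → HasDerivAt f 0 s)
    (hL : Tendsto f atTop (𝓝 L)) : f t = L := by
  have hconst : ∀ s, t ≤ s → f s = f t := fun s hts =>
    constant_of_has_deriv_right_zero
      (fun x hx => (hf x hx.1).continuousAt.continuousWithinAt)
      (fun x hx => (hf x hx.1).hasDerivWithinAt) s ⟨hts, le_rfl⟩
  refine tendsto_nhds_unique ?_ hL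
  exact tendsto_const_nhds.congr' <| (eventually_ge_atTop t).mono fun s hs => (hconst s hs).symm

noncomputable def erfc (x : ℝ) : ℝ := 1 - 2 / √π * ∫ u in (0:ℝ)..x, exp (-u ^ 2)

theorem hasDerivAt_erfc (x : ℝ) : HasDerivAt erfc (-(2 / √π * exp (-x ^ 2))) x := by
  have hcont : Continuous fun u : ℝ => exp (-u ^ 2) := by fun_prop
  exact ((hcont.integral_hasStrictDerivAt 0 x).hasDerivAt.const_mul (2 / √π)).const_sub 1

theorem tendsto_erfc_atTop : Tendsto erfc atTop (𝓝 0) := by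
  have hI : Tendsto (fun x => ∫ u in (0:ℝ)..x, exp (-u ^ 2)) atTop (𝓝 (√π / 2)) := by
    have h := intervalIntegral_tendsto_integral_Ioi (f := fun u => exp (-u ^ 2)) 0
      (by simpa using (integrable_exp_neg_mul_sq one_pos).integrableOn) tendsto_id
    have hG : ∫ u in Ioi (0:ℝ), exp (-u ^ 2) = √π / 2 := by simpa using integral_gaussian_Ioi 1
    rwa [hG] at h
  have hπ : 2 / √π * (√π / 2) = 1 := by field_simp
  have h := (hI.const_mul (2 / √π)).const_sub 1
  rwa [hπ, sub_self] at h

noncomputable def gaussCauchyIntegral (a s : ℝ) : ℝ :=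
  ∫ v in Ioi (0:ℝ), exp (-s * v ^ 2) / (a ^ 2 + v ^ 2)

section gaussCauchyIntegral

variable {a s : ℝ}

theorem exp_neg_mul_sq_div_le (ha : a ≠ 0) (v : ℝ) :
    exp (-s * v ^ 2) / (a ^ 2 + v ^ 2) ≤ exp (-s * v ^ 2) / a ^ 2 :=
  div_le_div_of_nonneg_left (exp_pos _).le (by positivity) (le_add_of_nonneg_right (sq_nonneg v))

theorem integrable_exp_neg_mul_sq_div (ha : a ≠ 0) (hs : 0 < s) :
    Integrable fun v => exp (-s * v ^ 2) / (a ^ 2 + v ^ 2) := by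
  refine ((integrable_exp_neg_mul_sq hs).div_const (a ^ 2)).mono'
    (by fun_prop : Measurable _).aestronglyMeasurable (.of_forall fun v => ?_)
  rw [norm_of_nonneg (by positivity)]
  exact exp_neg_mul_sq_div_le ha v

theorem gaussCauchyIntegral_nonneg : 0 ≤ gaussCauchyIntegral a s :=
  setIntegral_nonneg measurableSet_Ioi fun v _ => by positivity

theorem gaussCauchyIntegral_le (ha : a ≠ 0) (hs : 0 < s) :
    gaussCauchyIntegral a s ≤ √(π / s) / 2 / a ^ 2 := by
  rw [← integral_gaussian_Ioi, ← integral_div]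
  exact setIntegral_mono (integrable_exp_neg_mul_sq_div ha hs).integrableOn
    ((integrable_exp_neg_mul_sq hs).div_const _).integrableOn (exp_neg_mul_sq_div_le ha)

theorem tendsto_gaussCauchyIntegral_atTop (ha : a ≠ 0) :
    Tendsto (gaussCauchyIntegral a) atTop (𝓝 0) := by
  have hbound : Tendsto (fun s => √(π / s) / 2 / a ^ 2) atTop (𝓝 0) := by
    have hπs : Tendsto (fun s : ℝ => π / s) atTop (𝓝 0) := by
      simpa [div_eq_mul_inv] using tendsto_inv_atTop_zero.const_mul π
    simpa using (((continuous_sqrt.tendsto 0).comp hπs).div_const 2).div_const (a ^ 2)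
  refine tendsto_of_tendsto_of_tendsto_of_le_of_le' tendsto_const_nhds hbound
    (.of_forall fun _ => gaussCauchyIntegral_nonneg) ?_
  filter_upwards [eventually_gt_atTop 0] with s hs using gaussCauchyIntegral_le ha hs

theorem integral_neg_sq_mul_exp_neg_mul_sq_div (ha : a ≠ 0) (hs : 0 < s) :
    ∫ v in Ioi (0:ℝ), -(v ^ 2 * exp (-s * v ^ 2) / (a ^ 2 + v ^ 2)) =
      a ^ 2 * gaussCauchyIntegral a s - √(π / s) / 2 := by
  rw [gaussCauchyIntegral, ← integral_gaussian_Ioi, ← integral_const_mul,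
    ← integral_sub ((integrable_exp_neg_mul_sq_div ha hs).integrableOn.const_mul _)
      (integrable_exp_neg_mul_sq hs).integrableOn]
  refine setIntegral_congr_fun measurableSet_Ioi fun v _ => ?_
  have : a ^ 2 + v ^ 2 ≠ 0 := by positivity
  field_simp
  ring

theorem hasDerivAt_gaussCauchyIntegral (ha : a ≠ 0) (hs : 0 < s) :
    HasDerivAt (gaussCauchyIntegral a) (a ^ 2 * gaussCauchyIntegral a s - √(π / s) / 2) s := by
  rw [← integral_neg_sq_mul_exp_neg_mul_sq_div ha hs]
  refine (hasDerivAt_integral_of_dominated_loc_of_deriv_le (μ := volume.restrict (Ioi 0))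
    (F := fun x v => exp (-x * v ^ 2) / (a ^ 2 + v ^ 2))
    (F' := fun x v => -(v ^ 2 * exp (-x * v ^ 2) / (a ^ 2 + v ^ 2)))
    (bound := fun v => exp (-(s / 2) * v ^ 2)) (Metric.ball_mem_nhds s (half_pos hs))
    (.of_forall fun x => (by fun_prop : Measurable _).aestronglyMeasurable)
    (integrable_exp_neg_mul_sq_div ha hs).integrableOn
    (by fun_prop : Measurable _).aestronglyMeasurable ?_
    (integrable_exp_neg_mul_sq (half_pos hs)).integrableOn ?_).2
  · refine .of_forall fun v x hx => ?_
    have hx : s / 2 ≤ x := by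
      linarith [(abs_lt.mp (mem_ball_iff_norm.mp hx)).1]
    rw [norm_neg, norm_of_nonneg (by positivity), mul_div_right_comm]
    calc v ^ 2 / (a ^ 2 + v ^ 2) * exp (-x * v ^ 2) ≤ 1 * exp (-(s / 2) * v ^ 2) := by
          gcongr
          exact div_le_one_of_le₀ (le_add_of_nonneg_left (sq_nonneg a)) (by positivity)
      _ = exp (-(s / 2) * v ^ 2) := one_mul _
  · exact .of_forall fun v x _ =>
      (((hasDerivAt_neg x).mul_const (v ^ 2)).exp.div_const (a ^ 2 + v ^ 2)).congr_deriv (by ring)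

theorem hasDerivAt_exp_mul_gaussCauchyIntegral (ha : a ≠ 0) (hs : 0 < s) :
    HasDerivAt (fun x => exp (-a ^ 2 * x) * gaussCauchyIntegral a x)
      (-(exp (-a ^ 2 * s) * (√(π / s) / 2))) s :=
  ((hasDerivAt_id' s).const_mul (-a ^ 2)).exp.mul (hasDerivAt_gaussCauchyIntegral ha hs)
    |>.congr_deriv (by ring)

theorem hasDerivAt_const_mul_erfc_mul_sqrt (ha : a ≠ 0) (hs : 0 < s) :
    HasDerivAt (fun x => π / (2 * a) * erfc (a * √x))
      (-(exp (-a ^ 2 * s) * (√(π / s) / 2))) s := by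
  refine (((hasDerivAt_erfc (a * √s)).comp s
    ((hasDerivAt_sqrt hs.ne').const_mul a)).const_mul (π / (2 * a))).congr_deriv ?_
  have hπ : √π ^ 2 = π := sq_sqrt pi_pos.le
  have hs' : √s ≠ 0 := by positivity
  rw [mul_pow, sq_sqrt hs.le, sqrt_div' π hs.le]
  nth_rw 1 [← hπ]
  field_simp

theorem gaussCauchyIntegral_eq (ha : 0 < a) (hs : 0 < s) :
    gaussCauchyIntegral a s = π / (2 * a) * exp (a ^ 2 * s) * erfc (a * √s) := by
  have hzero : exp (-a ^ 2 * s) * gaussCauchyIntegral a s - π / (2 * a) * erfc (a * √s) = 0 := by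
    refine eq_of_hasDerivAt_zero_of_tendsto_atTop
      (f := fun x => exp (-a ^ 2 * x) * gaussCauchyIntegral a x - π / (2 * a) * erfc (a * √x))
      (fun x hx => ?_) ?_
    · have hx := hs.trans_le hx
      exact ((hasDerivAt_exp_mul_gaussCauchyIntegral ha.ne' hx).sub
        (hasDerivAt_const_mul_erfc_mul_sqrt ha.ne' hx)).congr_deriv (sub_self _)
    · have hexp : Tendsto (fun x => exp (-a ^ 2 * x)) atTop (𝓝 0) :=
        tendsto_exp_atBot.comp <| tendsto_id.const_mul_atTop_of_neg (by nlinarith)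
      have herfc := (tendsto_erfc_atTop.comp <| tendsto_sqrt_atTop.const_mul_atTop ha).const_mul
        (π / (2 * a))
      simpa using (hexp.mul (tendsto_gaussCauchyIntegral_atTop ha.ne')).sub herfc
  rw [sub_eq_zero] at hzero
  calc gaussCauchyIntegral a s
      = exp (a ^ 2 * s) * (exp (-a ^ 2 * s) * gaussCauchyIntegral a s) := by
        rw [← mul_assoc, ← exp_add]; simp
    _ = π / (2 * a) * exp (a ^ 2 * s) * erfc (a * √s) := by rw [hzero]; ring

end gaussCauchyIntegral

theorem relative_heat_trace_one_delta (α t : ℝ) (hα : 0 < α) (ht : 0 < t) :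
    ∫ v in Ioi (0:ℝ), Real.exp (-v ^ 2 * t) * (4 * α / ((4 * π * α) ^ 2 + v ^ 2)) =
      Real.exp ((4 * π * α) ^ 2 * t) / 2 *
        (1 - (2 / Real.sqrt π) *
          ∫ u in (0:ℝ)..(4 * π * α * Real.sqrt t), Real.exp (-u ^ 2)) := by
  have hint : ∫ v in Ioi (0:ℝ), exp (-v ^ 2 * t) * (4 * α / ((4 * π * α) ^ 2 + v ^ 2)) =
      4 * α * gaussCauchyIntegral (4 * π * α) t := by
    rw [gaussCauchyIntegral, ← integral_const_mul]
    refine setIntegral_congr_fun measurableSet_Ioi fun v _ => ?_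
    rw [show -t * v ^ 2 = -v ^ 2 * t by ring]
    ring
  rw [hint, gaussCauchyIntegral_eq (by positivity) ht, erfc]
  field_simp
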